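/- arXiv:2401.04640 — 2 statements merged into one kernel-verified Lean document; each statement's English description precedes it below -/
import Mathlib

section
/- Let ψ : ℝⁿ → ℝ ∪ {+∞} be proper closed convex and f : ℝⁿ → ℝ differentiable with L-Lipschitz gradient (L > 0); set F = f + ψ, assume F has nonempty minimizer set X* with minimal value F*, and let γ satisfy γL ∈ (0,1). Fix x₀ and suppose F satisfies 2-growth with constant κ > 0 on {y : F(y) ≤ F(x₀)}, i.e. F(y) − F* ≥ (κ/2)‖y − ȳ‖² for all such y (ȳ the Euclidean projection of y onto X*). Then for every x with F_γ(x) ≤ F_γ(x₀): F_γ(x) − F* ≥ κ(1 − γL)/(2(γκ + 1 − γL)) · ‖x − x̄‖², where x̄ is the Euclidean projection of x onto X* and F_γ is the Forward–Backward envelope. -/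
/-!
By the descent lemma, every term of the infimum defining `F_γ x` dominates
`F u + β ‖u - x‖²` with `β = 1/(2γ) - L/2 > 0`. This function of `u` is lower semicontinuous and
coercive, so it has a minimizer `z` (the forward–backward step of the paper), and
`F z ≤ F_γ x ≤ F_γ x₀ ≤ F x₀` puts `z` in the region where `2`-growth holds. Since
`‖x - x̄‖ ≤ ‖z - z̄‖ + ‖z - x‖`, the weighted inequality `αβ/(α+β) (a+b)² ≤ α a² + β b²` with
`α = κ/2` turns `F z - F* ≥ κ/2 ‖z - z̄‖²` plus the `β`-term into the claimed bound.
-/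

noncomputable section
open scoped RealInnerProductSpace

theorem div_mul_sq_le_mul_sq_add_mul_sq {α β a b t : ℝ} (hα : 0 ≤ α) (hβ : 0 ≤ β)
    (ht : 0 ≤ t) (htab : t ≤ a + b) :
    α * β / (α + β) * t ^ 2 ≤ α * a ^ 2 + β * b ^ 2 := by
  rcases (add_nonneg hα hβ).eq_or_lt with hαβ | hαβ
  · rw [← hαβ, div_zero, zero_mul]
    positivity
  have hsq : t ^ 2 ≤ (a + b) ^ 2 := pow_le_pow_left₀ ht htab 2
  calc α * β / (α + β) * t ^ 2 ≤ α * β / (α + β) * (a + b) ^ 2 := by gcongr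
    _ ≤ α * a ^ 2 + β * b ^ 2 := by
      rw [div_mul_eq_mul_div, div_le_iff₀ hαβ]
      nlinarith [sq_nonneg (α * a - β * b)]

theorem LowerSemicontinuous.add_coe {X : Type*} [TopologicalSpace X] {φ : X → EReal}
    (hφ : LowerSemicontinuous φ) {g : X → ℝ} (hg : Continuous g) :
    LowerSemicontinuous fun x ↦ φ x + (g x : EReal) :=
  hφ.add' (continuous_coe_real_ereal.comp hg).lowerSemicontinuous fun _ ↦
    EReal.continuousAt_add (Or.inr (EReal.coe_ne_bot _)) (Or.inr (EReal.coe_ne_top _))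

theorem LowerSemicontinuous.exists_forall_le_of_isBounded {X β : Type*} [PseudoMetricSpace X]
    [ProperSpace X] [LinearOrder β] [TopologicalSpace β] {g : X → β}
    (hg : LowerSemicontinuous g) {a : X} (ha : Bornology.IsBounded {u | g u ≤ g a}) :
    ∃ z, ∀ u, g z ≤ g u := by
  have hcompact : IsCompact {u | g u ≤ g a} :=
    Metric.isCompact_of_isClosed_isBounded (hg.isClosed_preimage (g a)) ha
  obtain ⟨z, hza, hz⟩ := (hg.lowerSemicontinuousOn _).exists_isMinOn
    ⟨a, le_refl (g a)⟩ hcompact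
  refine ⟨z, fun u ↦ ?_⟩
  rcases le_or_gt (g u) (g a) with hu | hu
  · exact hz hu
  · exact hza.trans hu.le

theorem LowerSemicontinuous.isClosed_setOf_eq_of_forall_le {X β : Type*} [TopologicalSpace X]
    [LinearOrder β] [TopologicalSpace β] {g : X → β} (hg : LowerSemicontinuous g) {c : β}
    (hc : ∀ x, c ≤ g x) : IsClosed {x | g x = c} := by
  convert hg.isClosed_preimage c using 1
  ext x
  exact ⟨le_of_eq, fun hx ↦ le_antisymm hx (hc x)⟩

theorem LowerSemicontinuous.exists_forall_add_mul_sq_norm_sub_le {E : Type*}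
    [NormedAddCommGroup E] [ProperSpace E] {F : E → EReal} (hF : LowerSemicontinuous F)
    {c : ℝ} (hc : ∀ u, (c : EReal) ≤ F u) {β : ℝ} (hβ : 0 < β) (x : E) :
    ∃ z, ∀ u, F z + ((β * ‖z - x‖ ^ 2 : ℝ) : EReal) ≤ F u + ((β * ‖u - x‖ ^ 2 : ℝ) : EReal) := by
  set g : E → EReal := fun u ↦ F u + ((β * ‖u - x‖ ^ 2 : ℝ) : EReal)
  have hg : LowerSemicontinuous g := hF.add_coe (by fun_prop)
  have hcg (u : E) : ((c + β * ‖u - x‖ ^ 2 : ℝ) : EReal) ≤ g u := by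
    rw [EReal.coe_add]
    exact add_le_add_left (hc u) _
  by_cases htop : ∀ u, g u = ⊤
  · exact ⟨x, fun u ↦ le_top.trans_eq (htop u).symm⟩
  obtain ⟨a, ha⟩ := not_forall.1 htop
  have hbot : g a ≠ ⊥ := ne_bot_of_le_ne_bot (EReal.coe_ne_bot _) (hcg a)
  set r := (g a).toReal
  refine hg.exists_forall_le_of_isBounded (a := a)
    ((Metric.isBounded_closedBall (x := x) (r := √((r - c) / β))).subset fun u hu ↦ ?_)
  have hreal : c + β * ‖u - x‖ ^ 2 ≤ r :=
    EReal.coe_le_coe_iff.1 ((hcg u).trans (hu.trans (EReal.coe_toReal ha hbot).ge))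
  rw [Metric.mem_closedBall, dist_eq_norm]
  exact Real.le_sqrt_of_sq_le ((le_div_iff₀ hβ).2 (by linarith))

theorem IsClosed.exists_forall_norm_sub_le {X : Type*} [NormedAddCommGroup X] [ProperSpace X]
    {s : Set X} (hs : IsClosed s) (hne : s.Nonempty) (x : X) :
    ∃ y ∈ s, ∀ z ∈ s, ‖x - y‖ ≤ ‖x - z‖ := by
  obtain ⟨y, hy, hdist⟩ := hs.exists_infDist_eq_dist hne x
  refine ⟨y, hy, fun z hz ↦ ?_⟩
  rw [← dist_eq_norm, ← dist_eq_norm, ← hdist]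
  exact Metric.infDist_le_dist_of_mem hz

section

variable {E : Type*} [NormedAddCommGroup E] [InnerProductSpace ℝ E] [CompleteSpace E]

theorem le_add_inner_gradient_add_sq_of_lipschitz {f : E → ℝ} {L : ℝ} (hf : Differentiable ℝ f)
    (hlip : ∀ x y, ‖gradient f x - gradient f y‖ ≤ L * ‖x - y‖) (x u : E) :
    f u ≤ f x + ⟪gradient f x, u - x⟫ + L / 2 * ‖u - x‖ ^ 2 := by
  set v := u - x
  -- the gap between `f` and its quadratic model along the segment is antitone in `t ≥ 0`
  let h : ℝ → ℝ := fun t ↦ f (x + t • v) - t * ⟪gradient f x, v⟫ - L / 2 * t ^ 2 * ‖v‖ ^ 2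
  have hderiv (t : ℝ) : HasDerivAt h
      (⟪gradient f (x + t • v), v⟫ - ⟪gradient f x, v⟫ - L * t * ‖v‖ ^ 2) t := by
    have hline : HasDerivAt (fun s : ℝ ↦ x + s • v) v t := by
      simpa using ((hasDerivAt_id t).smul_const v).const_add x
    have hf_line := (hf (x + t • v)).hasGradientAt.hasFDerivAt.comp_hasDerivAt t hline
    rw [InnerProductSpace.toDual_apply_apply] at hf_line
    refine ((hf_line.sub ((hasDerivAt_id t).mul_const ⟪gradient f x, v⟫)).sub
      (((hasDerivAt_pow 2 t).const_mul (L / 2)).mul_const (‖v‖ ^ 2))).congr_deriv ?_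
    simp only [Nat.cast_ofNat]
    ring
  have hderiv_nonpos (t : ℝ) (ht : 0 ≤ t) : deriv h t ≤ 0 := by
    have hgrad : ‖gradient f (x + t • v) - gradient f x‖ ≤ L * (t * ‖v‖) := by
      simpa [norm_smul, abs_of_nonneg ht] using hlip (x + t • v) x
    have hinner := real_inner_le_norm (gradient f (x + t • v) - gradient f x) v
    rw [inner_sub_left] at hinner
    rw [(hderiv t).deriv]
    nlinarith [mul_le_mul_of_nonneg_right hgrad (norm_nonneg v)]
  have hanti : AntitoneOn h (Set.Ici 0) :=
    antitoneOn_of_deriv_nonpos (convex_Ici 0)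
      (fun t _ ↦ (hderiv t).continuousAt.continuousWithinAt)
      (fun t _ ↦ (hderiv t).differentiableAt.differentiableWithinAt)
      (fun t ht ↦ hderiv_nonpos t (interior_subset ht))
  have hmono := hanti Set.self_mem_Ici (Set.mem_Ici.2 zero_le_one) zero_le_one
  simp only [h, v, zero_smul, one_smul, add_zero, add_sub_cancel] at hmono
  linarith

def forwardBackwardEnvelope (f : E → ℝ) (ψ : E → EReal) (γ : ℝ) (x : E) : EReal :=
  ⨅ u, ((f x + ⟪gradient f x, u - x⟫ + 1 / (2 * γ) * ‖u - x‖ ^ 2 : ℝ) : EReal) + ψ u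

theorem forwardBackwardEnvelope_le (f : E → ℝ) (ψ : E → EReal) (γ : ℝ) (x : E) :
    forwardBackwardEnvelope f ψ γ x ≤ f x + ψ x :=
  iInf_le_of_le x (by simp)

theorem iInf_add_mul_sq_norm_sub_le_forwardBackwardEnvelope {f : E → ℝ} {L : ℝ}
    (hf : Differentiable ℝ f) (hlip : ∀ x y, ‖gradient f x - gradient f y‖ ≤ L * ‖x - y‖)
    (ψ : E → EReal) (γ : ℝ) (x : E) :
    ⨅ u, (f u : EReal) + ψ u + (((1 / (2 * γ) - L / 2) * ‖u - x‖ ^ 2 : ℝ) : EReal)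
      ≤ forwardBackwardEnvelope f ψ γ x := by
  refine le_iInf fun u ↦ iInf_le_of_le u ?_
  have hdescent := le_add_inner_gradient_add_sq_of_lipschitz hf hlip x u
  calc (f u : EReal) + ψ u + (((1 / (2 * γ) - L / 2) * ‖u - x‖ ^ 2 : ℝ) : EReal)
      = ((f u + (1 / (2 * γ) - L / 2) * ‖u - x‖ ^ 2 : ℝ) : EReal) + ψ u := by
        rw [EReal.coe_add, add_right_comm]
    _ ≤ _ := by
        gcongr ?_ + _
        exact EReal.coe_le_coe_iff.2 (by linarith)

theorem exists_add_mul_sq_norm_sub_le_forwardBackwardEnvelope [ProperSpace E] {f : E → ℝ}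
    {L : ℝ} (hf : Differentiable ℝ f)
    (hlip : ∀ x y, ‖gradient f x - gradient f y‖ ≤ L * ‖x - y‖) {ψ : E → EReal}
    (hlsc : LowerSemicontinuous fun u ↦ (f u : EReal) + ψ u) {c : ℝ}
    (hc : ∀ u, (c : EReal) ≤ f u + ψ u) {γ : ℝ} (hβ : 0 < 1 / (2 * γ) - L / 2) (x : E) :
    ∃ z, (f z : EReal) + ψ z + (((1 / (2 * γ) - L / 2) * ‖z - x‖ ^ 2 : ℝ) : EReal)
      ≤ forwardBackwardEnvelope f ψ γ x := by
  obtain ⟨z, hz⟩ := hlsc.exists_forall_add_mul_sq_norm_sub_le hc hβ x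
  exact ⟨z, (le_iInf hz).trans (iInf_add_mul_sq_norm_sub_le_forwardBackwardEnvelope hf hlip ψ γ x)⟩

end

theorem forward_backward_envelope_two_growth_general (n : ℕ)
    (ψ : EuclideanSpace ℝ (Fin n) → EReal)
    (hψclosed : LowerSemicontinuous ψ)
    (f : EuclideanSpace ℝ (Fin n) → ℝ) (L : ℝ) (hL : 0 < L)
    (hf : Differentiable ℝ f)
    (hlip : ∀ x y, ‖gradient f x - gradient f y‖ ≤ L * ‖x - y‖)
    (F : EuclideanSpace ℝ (Fin n) → EReal)
    (hF : ∀ x, F x = (f x : EReal) + ψ x)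
    (Fs : ℝ) (Xs : Set (EuclideanSpace ℝ (Fin n)))
    (hXs : Xs = {y | F y = (Fs : EReal)})
    (hmin : ∀ y, (Fs : EReal) ≤ F y)
    (γ : ℝ) (hγL0 : 0 < γ * L) (hγL1 : γ * L < 1)
    (Fγ : EuclideanSpace ℝ (Fin n) → EReal)
    (hFγ : ∀ x, Fγ x = ⨅ u,
      ((f x + ⟪gradient f x, u - x⟫ + 1 / (2 * γ) * ‖u - x‖ ^ 2 : ℝ) : EReal) + ψ u)
    (x₀ : EuclideanSpace ℝ (Fin n)) (κ : ℝ) (hκ : 0 < κ)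
    (hgrowth : ∀ y, F y ≤ F x₀ → ∀ ybar ∈ Xs, (∀ z ∈ Xs, ‖y - ybar‖ ≤ ‖y - z‖) →
      ((Fs + κ / 2 * ‖y - ybar‖ ^ 2 : ℝ) : EReal) ≤ F y) :
    ∀ x, Fγ x ≤ Fγ x₀ → ∀ xbar ∈ Xs, (∀ z ∈ Xs, ‖x - xbar‖ ≤ ‖x - z‖) →
      ((Fs + κ * (1 - γ * L) / (2 * (γ * κ + 1 - γ * L)) * ‖x - xbar‖ ^ 2 : ℝ) : EReal)
        ≤ Fγ x := by
  intro x hx xbar hxbar hxproj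
  obtain rfl : Fγ = forwardBackwardEnvelope f ψ γ := funext hFγ
  obtain rfl : F = fun y ↦ (f y : EReal) + ψ y := funext hF
  have hγ : 0 < γ := pos_of_mul_pos_left hγL0 hL.le
  have hβ : 1 / (2 * γ) - L / 2 = (1 - γ * L) / (2 * γ) := by field_simp
  set β := 1 / (2 * γ) - L / 2
  have hβpos : 0 < β := hβ ▸ div_pos (by linarith) (by positivity)
  have hFlsc : LowerSemicontinuous fun y ↦ (f y : EReal) + ψ y := by
    simpa only [add_comm] using hψclosed.add_coe hf.continuous
  obtain ⟨z, hzx⟩ :=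
    exists_add_mul_sq_norm_sub_le_forwardBackwardEnvelope hf hlip hFlsc hmin hβpos x
  have hFz : (f z : EReal) + ψ z ≤ f x₀ + ψ x₀ := calc
    (f z : EReal) + ψ z ≤ f z + ψ z + ((β * ‖z - x‖ ^ 2 : ℝ) : EReal) :=
      le_add_of_nonneg_right (EReal.coe_nonneg.2 (by positivity))
    _ ≤ forwardBackwardEnvelope f ψ γ x₀ := hzx.trans hx
    _ ≤ f x₀ + ψ x₀ := forwardBackwardEnvelope_le f ψ γ x₀
  obtain ⟨zbar, hzbar, hzproj⟩ := (hXs ▸ hFlsc.isClosed_setOf_eq_of_forall_le hmin :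
    IsClosed Xs).exists_forall_norm_sub_le ⟨xbar, hxbar⟩ z
  have hdist : ‖x - xbar‖ ≤ ‖z - zbar‖ + ‖z - x‖ := by
    rw [norm_sub_rev z x, add_comm]
    exact (hxproj zbar hzbar).trans (norm_sub_le_norm_sub_add_norm_sub x z zbar)
  have hconst : κ * (1 - γ * L) / (2 * (γ * κ + 1 - γ * L)) = κ / 2 * β / (κ / 2 + β) := by
    rw [hβ]
    field_simp
    ring
  have hquad := div_mul_sq_le_mul_sq_add_mul_sq (α := κ / 2) (by positivity) hβpos.le
    (norm_nonneg _) hdist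
  rw [← hconst] at hquad
  calc ((Fs + κ * (1 - γ * L) / (2 * (γ * κ + 1 - γ * L)) * ‖x - xbar‖ ^ 2 : ℝ) : EReal)
      ≤ ((Fs + κ / 2 * ‖z - zbar‖ ^ 2 : ℝ) : EReal) + ((β * ‖z - x‖ ^ 2 : ℝ) : EReal) := by
        rw [← EReal.coe_add, EReal.coe_le_coe_iff]
        linarith
    _ ≤ f z + ψ z + ((β * ‖z - x‖ ^ 2 : ℝ) : EReal) := by
        gcongr
        exact hgrowth z hFz zbar hzbar hzproj
    _ ≤ forwardBackwardEnvelope f ψ γ x := hzx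

/-- let `ψ : ℝⁿ → ℝ ∪ {+∞}` (modeled as an `EReal`-valued function never
taking `⊥`) be proper closed convex and `f : ℝⁿ → ℝ` differentiable with `L`-Lipschitz
gradient (`L > 0`); set `F = f + ψ`, with nonempty minimizer set `X*` and (real) minimal
value `F*`, and let `γ` satisfy `γL ∈ (0,1)`.  Let `F_γ` be the Forward–Backward envelope
`F_γ(x) = inf_u { f(x) + ⟨∇f(x), u−x⟩ + ‖u−x‖²/(2γ) + ψ(u) }`.  Fix `x₀` and suppose `F`
satisfies `2`-growth with constant `κ > 0` on `{y : F(y) ≤ F(x₀)}` (where `ybar` denotes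
the Euclidean projection of `y` onto `X*`).  Then for every `x` with `F_γ(x) ≤ F_γ(x₀)`:
`F_γ(x) − F* ≥ κ(1 − γL)/(2(γκ + 1 − γL)) · ‖x − xbar‖²`. -/
theorem forward_backward_envelope_two_growth (n : ℕ)
    (ψ : EuclideanSpace ℝ (Fin n) → EReal)
    (hψbot : ∀ x, ψ x ≠ ⊥) (hψproper : ∃ x, ψ x ≠ ⊤)
    (hψclosed : LowerSemicontinuous ψ)
    (hψconvex : ∀ (u v : EuclideanSpace ℝ (Fin n)) (a c : ℝ), 0 ≤ a → 0 ≤ c → a + c = 1 →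
      ψ (a • u + c • v) ≤ (a : EReal) * ψ u + (c : EReal) * ψ v)
    (f : EuclideanSpace ℝ (Fin n) → ℝ) (L : ℝ) (hL : 0 < L)
    (hf : Differentiable ℝ f)
    (hlip : ∀ x y, ‖gradient f x - gradient f y‖ ≤ L * ‖x - y‖)
    (F : EuclideanSpace ℝ (Fin n) → EReal)
    (hF : ∀ x, F x = (f x : EReal) + ψ x)
    (Fs : ℝ) (Xs : Set (EuclideanSpace ℝ (Fin n)))
    (hXsne : Xs.Nonempty) (hXs : Xs = {y | F y = (Fs : EReal)})
    (hmin : ∀ y, (Fs : EReal) ≤ F y)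
    (γ : ℝ) (hγL0 : 0 < γ * L) (hγL1 : γ * L < 1)
    (Fγ : EuclideanSpace ℝ (Fin n) → EReal)
    (hFγ : ∀ x, Fγ x = ⨅ u,
      ((f x + ⟪gradient f x, u - x⟫ + 1 / (2 * γ) * ‖u - x‖ ^ 2 : ℝ) : EReal) + ψ u)
    (x₀ : EuclideanSpace ℝ (Fin n)) (κ : ℝ) (hκ : 0 < κ)
    (hgrowth : ∀ y, F y ≤ F x₀ → ∀ ybar ∈ Xs, (∀ z ∈ Xs, ‖y - ybar‖ ≤ ‖y - z‖) →
      ((Fs + κ / 2 * ‖y - ybar‖ ^ 2 : ℝ) : EReal) ≤ F y) :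
    ∀ x, Fγ x ≤ Fγ x₀ → ∀ xbar ∈ Xs, (∀ z ∈ Xs, ‖x - xbar‖ ≤ ‖x - z‖) →
      ((Fs + κ * (1 - γ * L) / (2 * (γ * κ + 1 - γ * L)) * ‖x - xbar‖ ^ 2 : ℝ) : EReal)
        ≤ Fγ x :=
  forward_backward_envelope_two_growth_general n ψ hψclosed f L hL hf hlip F hF Fs Xs hXs hmin γ
    hγL0 hγL1 Fγ hFγ x₀ κ hκ hgrowth
end
end

section
/- Let F_γ : ℝⁿ → ℝ be convex and differentiable with block coordinate-wise Lipschitz gradient with constants Lᵢ > 0, let X* ⊆ ℝⁿ be nonempty closed convex and F* ∈ ℝ with F_γ(x*) ≤ F* for every x* ∈ X*, and suppose the 2-growth condition F_γ(x) − F* ≥ (κ̄/2)‖x − x̄‖₁² holds for all x ∈ ℝⁿ with some κ̄ > 0, where x̄ is the ‖·‖₁-projection of x onto X*. Define Tᵢx := x − (1/Lᵢ) Uᵢ Uᵢᵀ∇F_γ(x). Then for every x ∈ ℝⁿ: (1/N) ∑_{i=1}^{N} [ (1/2)‖Tᵢx − (Tᵢx)‾‖₁² + F_γ(Tᵢx)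 − F* ] ≤ (1 − κ̄/(N(1+κ̄))) · [ (1/2)‖x − x̄‖₁² + F_γ(x) − F* ], where (Tᵢx)‾ is the ‖·‖₁-projection of Tᵢx onto X*. -/
/-!
A block step lowers `F_γ` by at least `‖Uᵢᵀ∇F_γ(x)‖² / (2Lᵢ)` (block descent lemma), while
`‖Tᵢx − x̄‖₁² = ‖x − x̄‖₁² − 2⟪Uᵢᵀ∇F_γ(x), x − x̄⟫ + ‖Uᵢᵀ∇F_γ(x)‖² / Lᵢ`, so the squared-gradient
terms cancel in the potential `Φ = ½‖· − x̄‖₁² + F_γ − F*`; measuring `Tᵢx` against its own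
projection instead of `x̄` only helps. Averaging over the blocks sums the inner products to
`⟪∇F_γ(x), x − x̄⟫ ≥ F_γ(x) − F*` (convexity), so the average potential is at most
`Φ(x) − (F_γ(x) − F*)/N`, and the growth condition says `F_γ(x) − F* ≥ κ̄ Φ(x) / (1 + κ̄)`.
-/

noncomputable section
open scoped RealInnerProductSpace

/-- `blockProj b i x` models `Uᵢ Uᵢᵀ x`: the vector of `ℝⁿ` keeping the coordinates of block
`i` (as given by the block assignment `b : Fin n → Fin N`) and zeroing the others. -/
def blockProj {n N : ℕ} (b : Fin n → Fin N) (i : Fin N) (x : EuclideanSpace ℝ (Fin n)) :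
    EuclideanSpace ℝ (Fin n) :=
  (EuclideanSpace.equiv (Fin n) ℝ).symm (fun j => if b j = i then x j else 0)

/-- The squared weighted norm `‖x‖₁² = ∑ᵢ Lᵢ ‖Uᵢᵀ x‖²`. -/
def wnormSq {n N : ℕ} (b : Fin n → Fin N) (L : Fin N → ℝ)
    (x : EuclideanSpace ℝ (Fin n)) : ℝ :=
  ∑ i : Fin N, L i * ‖blockProj b i x‖ ^ 2

/-- The weighted norm `‖x‖₁ = (∑ᵢ Lᵢ ‖Uᵢᵀ x‖²)^{1/2}`. -/
def wnorm {n N : ℕ} (b : Fin n → Fin N) (L : Fin N → ℝ)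
    (x : EuclideanSpace ℝ (Fin n)) : ℝ :=
  Real.sqrt (wnormSq b L x)

/-- The coordinate gradient step `Tᵢ x = x − (1/Lᵢ) Uᵢ Uᵢᵀ ∇F_γ(x)`. -/
def coordStep {n N : ℕ} (b : Fin n → Fin N) (L : Fin N → ℝ)
    (Fγ : EuclideanSpace ℝ (Fin n) → ℝ) (i : Fin N) (x : EuclideanSpace ℝ (Fin n)) :
    EuclideanSpace ℝ (Fin n) :=
  x - (1 / L i) • blockProj b i (gradient Fγ x)

open Set

section FirstOrder

variable {E : Type*} [NormedAddCommGroup E] [NormedSpace ℝ E]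

theorem ConvexOn.add_fderiv_sub_le {s : Set E} {f : E → ℝ} {f' : E →L[ℝ] ℝ} {x z : E}
    (hf : ConvexOn ℝ s f) (hx : x ∈ s) (hz : z ∈ s) (hf' : HasFDerivAt f f' x) :
    f x + f' (z - x) ≤ f z := by
  set ℓ : ℝ →ᵃ[ℝ] E := AffineMap.lineMap x z
  have hline : HasDerivAt (f ∘ ℓ) (f' (z - x)) 0 := by
    have hf'' : HasFDerivAt f f' (ℓ 0) := by simpa [ℓ] using hf'
    exact hf''.comp_hasDerivAt (0 : ℝ) AffineMap.hasDerivAt_lineMap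
  have hslope := (hf.comp_affineMap ℓ).le_slope_of_hasDerivAt
    (by simpa [ℓ] using hx) (by simpa [ℓ] using hz) zero_lt_one hline
  simp only [ℓ, slope_def_field, Function.comp_apply, AffineMap.lineMap_apply_one,
    AffineMap.lineMap_apply_zero, sub_zero, div_one] at hslope
  linarith

theorem Differentiable.le_add_fderiv_add_of_fderiv_sub_le {f : E → ℝ} (hf : Differentiable ℝ f)
    {x h : E} {C : ℝ}
    (hC : ∀ t ∈ Ioo (0 : ℝ) 1, fderiv ℝ f (x + t • h) h - fderiv ℝ f x h ≤ C * t) :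
    f (x + h) ≤ f x + fderiv ℝ f x h + C / 2 := by
  set φ : ℝ → ℝ := fun t => f (x + t • h) - t * fderiv ℝ f x h - C * t ^ 2 / 2
  have hφ : ∀ t, HasDerivAt φ (fderiv ℝ f (x + t • h) h - fderiv ℝ f x h - C * t) t := by
    intro t
    have hline : HasDerivAt (fun s : ℝ => x + s • h) h t := by
      simpa using ((hasDerivAt_id t).smul_const h).const_add x
    exact ((((hf _).hasFDerivAt.comp_hasDerivAt t hline).sub
      ((hasDerivAt_id t).mul_const (fderiv ℝ f x h))).sub
      (((hasDerivAt_pow 2 t).const_mul C).div_const 2)).congr_deriv (by norm_num; ring)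
  have hanti : AntitoneOn φ (Icc 0 1) :=
    antitoneOn_of_hasDerivWithinAt_nonpos (convex_Icc 0 1)
      (HasDerivAt.continuousOn fun t _ => hφ t) (fun t _ => (hφ t).hasDerivWithinAt)
      (fun t ht => by rw [interior_Icc] at ht; linarith [hC t ht])
  have hφ01 : φ 1 ≤ φ 0 :=
    hanti (left_mem_Icc.2 zero_le_one) (right_mem_Icc.2 zero_le_one) zero_le_one
  simp only [φ, one_smul, one_mul, one_pow, mul_one, zero_smul, add_zero, zero_mul, sub_zero,
    ne_eq, OfNat.ofNat_ne_zero, not_false_eq_true, zero_pow, mul_zero, zero_div] at hφ01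
  linarith

end FirstOrder

section Blocks

variable {n N : ℕ} (b : Fin n → Fin N)

lemma blockProj_apply (i : Fin N) (x : EuclideanSpace ℝ (Fin n)) (j : Fin n) :
    blockProj b i x j = if b j = i then x j else 0 := rfl

lemma blockProj_add (i : Fin N) (x y : EuclideanSpace ℝ (Fin n)) :
    blockProj b i (x + y) = blockProj b i x + blockProj b i y := by
  ext j
  simp only [blockProj_apply, PiLp.add_apply]
  split_ifs <;> simp

lemma blockProj_smul (i : Fin N) (c : ℝ) (x : EuclideanSpace ℝ (Fin n)) :
    blockProj b i (c • x) = c • blockProj b i x := by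
  ext j
  simp only [blockProj_apply, PiLp.smul_apply, smul_eq_mul]
  split_ifs <;> simp

lemma blockProj_blockProj (i j : Fin N) (x : EuclideanSpace ℝ (Fin n)) :
    blockProj b j (blockProj b i x) = if j = i then blockProj b i x else 0 := by
  ext k
  by_cases hji : j = i <;> by_cases hk : b k = i <;> simp [blockProj_apply, hji, hk, Ne.symm]

lemma sum_blockProj (x : EuclideanSpace ℝ (Fin n)) : ∑ i, blockProj b i x = x := by
  ext j
  simp [blockProj_apply]

lemma inner_blockProj_left (i : Fin N) (u v : EuclideanSpace ℝ (Fin n)) :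
    ⟪blockProj b i u, v⟫ = ⟪u, blockProj b i v⟫ := by
  simp only [PiLp.inner_apply, blockProj_apply]
  refine Finset.sum_congr rfl fun j _ => ?_
  split_ifs <;> simp

lemma inner_blockProj_blockProj (i : Fin N) (u v : EuclideanSpace ℝ (Fin n)) :
    ⟪blockProj b i u, blockProj b i v⟫ = ⟪blockProj b i u, v⟫ := by
  rw [inner_blockProj_left, blockProj_blockProj, if_pos rfl, inner_blockProj_left]

lemma wnormSq_nonneg {L : Fin N → ℝ} (hL : ∀ i, 0 ≤ L i) (x : EuclideanSpace ℝ (Fin n)) :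
    0 ≤ wnormSq b L x :=
  Finset.sum_nonneg fun i _ => mul_nonneg (hL i) (sq_nonneg _)

lemma wnormSq_le_of_wnorm_le {L : Fin N → ℝ} (hL : ∀ i, 0 ≤ L i)
    {x y : EuclideanSpace ℝ (Fin n)} (h : wnorm b L x ≤ wnorm b L y) :
    wnormSq b L x ≤ wnormSq b L y :=
  (Real.sqrt_le_sqrt_iff (wnormSq_nonneg b hL y)).1 h

lemma wnormSq_add_blockProj (L : Fin N → ℝ) (i : Fin N) (u v : EuclideanSpace ℝ (Fin n)) :
    wnormSq b L (u + blockProj b i v)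
      = wnormSq b L u + L i * (2 * ⟪blockProj b i v, u⟫ + ‖blockProj b i v‖ ^ 2) := by
  have hterm : ∀ j, L j * ‖blockProj b j (u + blockProj b i v)‖ ^ 2
      = L j * ‖blockProj b j u‖ ^ 2
        + if j = i then L i * (2 * ⟪blockProj b i v, u⟫ + ‖blockProj b i v‖ ^ 2) else 0 := by
    intro j
    rw [blockProj_add, blockProj_blockProj]
    split_ifs with hji
    · subst hji
      rw [norm_add_sq_real, real_inner_comm, inner_blockProj_blockProj]
      ring
    · simp
  simp only [wnormSq, hterm, Finset.sum_add_distrib, Finset.sum_ite_eq', Finset.mem_univ, if_true]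

lemma coordStep_eq_add_blockProj (L : Fin N → ℝ) (F : EuclideanSpace ℝ (Fin n) → ℝ) (i : Fin N)
    (x : EuclideanSpace ℝ (Fin n)) :
    coordStep b L F i x = x + blockProj b i (-(1 / L i) • gradient F x) := by
  rw [coordStep, blockProj_smul, neg_smul, ← sub_eq_add_neg]

lemma le_add_inner_gradient_add_of_blockLipschitz {F : EuclideanSpace ℝ (Fin n) → ℝ}
    (hF : Differentiable ℝ F) {i : Fin N} {Li : ℝ}
    (hlip : ∀ x h, blockProj b i h = h →
      ‖blockProj b i (gradient F (x + h) - gradient F x)‖ ≤ Li * ‖h‖)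
    (x h : EuclideanSpace ℝ (Fin n)) (hh : blockProj b i h = h) :
    F (x + h) ≤ F x + ⟪gradient F x, h⟫ + Li / 2 * ‖h‖ ^ 2 := by
  have hdesc := hF.le_add_fderiv_add_of_fderiv_sub_le (x := x) (h := h) (C := Li * ‖h‖ ^ 2)
    fun t ht => by
      have hth : blockProj b i (t • h) = t • h := by rw [blockProj_smul, hh]
      have hnorm : ‖t • h‖ = t * ‖h‖ := by rw [norm_smul, Real.norm_of_nonneg ht.1.le]
      calc fderiv ℝ F (x + t • h) h - fderiv ℝ F x h
          = ⟪blockProj b i (gradient F (x + t • h) - gradient F x), h⟫ := by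
            rw [← inner_gradient_left, ← inner_gradient_left, ← inner_sub_left,
              inner_blockProj_left, hh]
        _ ≤ ‖blockProj b i (gradient F (x + t • h) - gradient F x)‖ * ‖h‖ :=
            real_inner_le_norm _ _
        _ ≤ Li * (t * ‖h‖) * ‖h‖ := by
            gcongr
            rw [← hnorm]
            exact hlip x _ hth
        _ = Li * ‖h‖ ^ 2 * t := by ring
  rw [← inner_gradient_left] at hdesc
  linarith

lemma apply_coordStep_le {L : Fin N → ℝ} {F : EuclideanSpace ℝ (Fin n) → ℝ}
    (hF : Differentiable ℝ F) {i : Fin N} (hLi : L i ≠ 0)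
    (hlip : ∀ x h, blockProj b i h = h →
      ‖blockProj b i (gradient F (x + h) - gradient F x)‖ ≤ L i * ‖h‖)
    (x : EuclideanSpace ℝ (Fin n)) :
    F (coordStep b L F i x) ≤ F x - ‖blockProj b i (gradient F x)‖ ^ 2 / (2 * L i) := by
  have hdesc := le_add_inner_gradient_add_of_blockLipschitz b hF hlip x
    (blockProj b i (-(1 / L i) • gradient F x)) (by rw [blockProj_blockProj, if_pos rfl])
  rw [← coordStep_eq_add_blockProj, blockProj_smul, real_inner_smul_right, norm_smul,
    ← inner_blockProj_left, ← inner_blockProj_blockProj,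
    real_inner_self_eq_norm_sq, mul_pow, Real.norm_eq_abs, sq_abs] at hdesc
  convert hdesc using 1
  field_simp
  ring

lemma half_wnormSq_coordStep_sub_add_le {L : Fin N → ℝ} {F : EuclideanSpace ℝ (Fin n) → ℝ}
    (hF : Differentiable ℝ F) {i : Fin N} (hLi : L i ≠ 0)
    (hlip : ∀ x h, blockProj b i h = h →
      ‖blockProj b i (gradient F (x + h) - gradient F x)‖ ≤ L i * ‖h‖)
    (x w : EuclideanSpace ℝ (Fin n)) :
    1 / 2 * wnormSq b L (coordStep b L F i x - w) + F (coordStep b L F i x)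
      ≤ 1 / 2 * wnormSq b L (x - w) + F x - ⟪blockProj b i (gradient F x), x - w⟫ := by
  have hdist : wnormSq b L (coordStep b L F i x - w)
      = wnormSq b L (x - w) - 2 * ⟪blockProj b i (gradient F x), x - w⟫
        + ‖blockProj b i (gradient F x)‖ ^ 2 / L i := by
    rw [coordStep_eq_add_blockProj, add_sub_right_comm, wnormSq_add_blockProj, blockProj_smul,
      real_inner_smul_left, norm_smul, mul_pow, Real.norm_eq_abs, sq_abs]
    field_simp
    ring
  have hhalf : ‖blockProj b i (gradient F x)‖ ^ 2 / (2 * L i)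
      = 1 / 2 * (‖blockProj b i (gradient F x)‖ ^ 2 / L i) := by ring
  linarith [apply_coordStep_le b hF hLi hlip x]

end Blocks

lemma one_div_mul_le_one_sub_div_mul {N κ Φ D S : ℝ} (hN : 0 < N) (hκ : 0 < 1 + κ)
    (hD : κ * (Φ - D) ≤ D) (hS : S ≤ N * Φ - D) :
    1 / N * S ≤ (1 - κ / (N * (1 + κ))) * Φ := by
  have hdecrease : κ * Φ / (N * (1 + κ)) ≤ D / N := by
    rw [div_le_div_iff₀ (by positivity) hN]
    nlinarith [mul_le_mul_of_nonneg_left hD hN.le]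
  calc 1 / N * S ≤ 1 / N * (N * Φ - D) := by gcongr
    _ = Φ - D / N := by field_simp
    _ ≤ Φ - κ * Φ / (N * (1 + κ)) := by linarith
    _ = (1 - κ / (N * (1 + κ))) * Φ := by ring

theorem coordinate_descent_one_step_two_growth_general (n N : ℕ) (hN : 0 < N)
    (b : Fin n → Fin N) (L : Fin N → ℝ) (hL : ∀ i, 0 < L i)
    (Fγ : EuclideanSpace ℝ (Fin n) → ℝ)
    (hconv : ConvexOn ℝ Set.univ Fγ) (hdiff : Differentiable ℝ Fγ)
    (hlip : ∀ (x h : EuclideanSpace ℝ (Fin n)) (i : Fin N), blockProj b i h = h →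
      ‖blockProj b i (gradient Fγ (x + h) - gradient Fγ x)‖ ≤ L i * ‖h‖)
    (Xs : Set (EuclideanSpace ℝ (Fin n)))
    (Fs : ℝ) (hFs : ∀ z ∈ Xs, Fγ z ≤ Fs)
    (proj : EuclideanSpace ℝ (Fin n) → EuclideanSpace ℝ (Fin n))
    (hprojmem : ∀ z, proj z ∈ Xs)
    (hproj : ∀ z, ∀ w ∈ Xs, wnorm b L (z - proj z) ≤ wnorm b L (z - w))
    (κbar : ℝ) (hκ : 0 < κbar)
    (hgrowth : ∀ x, κbar / 2 * wnormSq b L (x - proj x) ≤ Fγ x - Fs)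
    (x : EuclideanSpace ℝ (Fin n)) :
    (1 / (N : ℝ)) * ∑ i : Fin N,
        ((1 / 2) * wnormSq b L (coordStep b L Fγ i x - proj (coordStep b L Fγ i x))
          + Fγ (coordStep b L Fγ i x) - Fs)
      ≤ (1 - κbar / ((N : ℝ) * (1 + κbar)))
          * ((1 / 2) * wnormSq b L (x - proj x) + Fγ x - Fs) := by
  set g := gradient Fγ x
  have hstep : ∀ i, (1 / 2) * wnormSq b L (coordStep b L Fγ i x - proj (coordStep b L Fγ i x))
      + Fγ (coordStep b L Fγ i x) - Fs
      ≤ (1 / 2) * wnormSq b L (x - proj x) + Fγ x - Fs - ⟪blockProj b i g, x - proj x⟫ := by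
    intro i
    have hnearest := wnormSq_le_of_wnorm_le b (fun j => (hL j).le)
      (hproj (coordStep b L Fγ i x) _ (hprojmem x))
    linarith [half_wnormSq_coordStep_sub_add_le b hdiff (hL i).ne' (fun y h => hlip y h i) x
      (proj x)]
  have hgap : Fγ x - Fs ≤ ⟪g, x - proj x⟫ := by
    have hfirst := hconv.add_fderiv_sub_le (mem_univ x) (mem_univ (proj x)) (hdiff x).hasFDerivAt
    rw [← inner_gradient_left, ← neg_sub, inner_neg_right] at hfirst
    linarith [hFs _ (hprojmem x)]
  refine one_div_mul_le_one_sub_div_mul (D := Fγ x - Fs) (by exact_mod_cast hN) (by linarith)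
    (by linarith [hgrowth x]) ?_
  calc ∑ i, ((1 / 2) * wnormSq b L (coordStep b L Fγ i x - proj (coordStep b L Fγ i x))
        + Fγ (coordStep b L Fγ i x) - Fs)
      ≤ ∑ i, ((1 / 2) * wnormSq b L (x - proj x) + Fγ x - Fs - ⟪blockProj b i g, x - proj x⟫) :=
        Finset.sum_le_sum fun i _ => hstep i
    _ = N * ((1 / 2) * wnormSq b L (x - proj x) + Fγ x - Fs) - ⟪g, x - proj x⟫ := by
        rw [Finset.sum_sub_distrib, ← sum_inner, sum_blockProj, Finset.sum_const,
          Finset.card_univ, Fintype.card_fin, nsmul_eq_mul]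
    _ ≤ N * ((1 / 2) * wnormSq b L (x - proj x) + Fγ x - Fs) - (Fγ x - Fs) := by linarith

/-- let `F_γ` be convex and differentiable with block coordinate-wise
Lipschitz gradient (constants `Lᵢ > 0`), `X*` a nonempty closed convex set and `F* ∈ ℝ`
with `F_γ(x*) ≤ F*` on `X*`, and suppose the `2`-growth condition
`F_γ(x) − F* ≥ (κ̄/2)‖x − x̄‖₁²` holds for all `x` (`proj` being the `‖·‖₁`-projection
map onto `X*`).  Then for every `x`:
`(1/N) ∑ᵢ [ ½‖Tᵢx − (Tᵢx)‾‖₁² + F_γ(Tᵢx) − F* ]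
  ≤ (1 − κ̄/(N(1+κ̄))) [ ½‖x − x̄‖₁² + F_γ(x) − F* ]`. -/
theorem coordinate_descent_one_step_two_growth (n N : ℕ) (hN : 0 < N)
    (b : Fin n → Fin N) (L : Fin N → ℝ) (hL : ∀ i, 0 < L i)
    (Fγ : EuclideanSpace ℝ (Fin n) → ℝ)
    (hconv : ConvexOn ℝ Set.univ Fγ) (hdiff : Differentiable ℝ Fγ)
    (hlip : ∀ (x h : EuclideanSpace ℝ (Fin n)) (i : Fin N), blockProj b i h = h →
      ‖blockProj b i (gradient Fγ (x + h) - gradient Fγ x)‖ ≤ L i * ‖h‖)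
    (Xs : Set (EuclideanSpace ℝ (Fin n)))
    (hXsne : Xs.Nonempty) (hXscl : IsClosed Xs) (hXsconv : Convex ℝ Xs)
    (Fs : ℝ) (hFs : ∀ z ∈ Xs, Fγ z ≤ Fs)
    (proj : EuclideanSpace ℝ (Fin n) → EuclideanSpace ℝ (Fin n))
    (hprojmem : ∀ z, proj z ∈ Xs)
    (hproj : ∀ z, ∀ w ∈ Xs, wnorm b L (z - proj z) ≤ wnorm b L (z - w))
    (κbar : ℝ) (hκ : 0 < κbar)
    (hgrowth : ∀ x, κbar / 2 * wnormSq b L (x - proj x) ≤ Fγ x - Fs)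
    (x : EuclideanSpace ℝ (Fin n)) :
    (1 / (N : ℝ)) * ∑ i : Fin N,
        ((1 / 2) * wnormSq b L (coordStep b L Fγ i x - proj (coordStep b L Fγ i x))
          + Fγ (coordStep b L Fγ i x) - Fs)
      ≤ (1 - κbar / ((N : ℝ) * (1 + κbar)))
          * ((1 / 2) * wnormSq b L (x - proj x) + Fγ x - Fs) :=
  coordinate_descent_one_step_two_growth_general n N hN b L hL Fγ hconv hdiff hlip Xs Fs hFs proj
    hprojmem hproj κbar hκ hgrowth x
end
end
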